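/- Let q, α, t be complex numbers with |q| < 1, |α| < 1, and |t| < 1. Then Σ_{n=0}^{∞} q^n · [(q^{n+1};q)_∞ (α t q^n;q)_∞] / [(α q^n;q)_∞ (t q^n;q)_∞] = Σ_{n=0}^{∞} t^n / (1 − α q^n), both series converging absolutely. -/

import Mathlib

/-- Finite q-Pochhammer symbol `(a;q)_n`. -/
noncomputable def qp (q a : ℂ) (n : ℕ) : ℂ := ∏ k ∈ Finset.range n, (1 - a * q ^ k)

/-- Infinite q-Pochhammer symbol `(a;q)_∞`. -/
noncomputable def qpi (q a : ℂ) : ℂ := ∏' k : ℕ, (1 - a * q ^ k)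

/-- Real finite q-Pochhammer symbol. -/
noncomputable def qpR (q a : ℝ) (n : ℕ) : ℝ := ∏ k ∈ Finset.range n, (1 - a * q ^ k)

/-- The q-functions `C_n^{(α,β)}(e^{iθ};q)`; for `α = β` these are the continuous
q-ultraspherical polynomials `C_n(cos θ; β | q)`. -/
noncomputable def Cab (q α β : ℂ) (n : ℕ) (θ : ℝ) : ℂ :=
  ∑ k ∈ Finset.range (n + 1),
    qp q α k * qp q β (n - k) / (qp q q k * qp q q (n - k)) *
      Complex.exp (Complex.I * ((n : ℂ) - 2 * (k : ℂ)) * (θ : ℂ))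

/-- The weight function `ω^{(α,β)}(cos θ | q)`; for `α = β` this is `ω_β(cos θ | q)`. -/
noncomputable def wab (q α β : ℂ) (θ : ℝ) : ℂ :=
  qpi q (Complex.exp (2 * Complex.I * (θ : ℂ))) *
      qpi q (Complex.exp (-(2 * Complex.I * (θ : ℂ)))) /
    (qpi q (α * Complex.exp (2 * Complex.I * (θ : ℂ))) *
      qpi q (β * Complex.exp (-(2 * Complex.I * (θ : ℂ)))))

/-- The normalization constant `h_n(β|q)`. -/
noncomputable def hcst (q β : ℂ) (n : ℕ) : ℂ :=
  qpi q q * qpi q (β ^ 2) * qp q q n * (1 - β * q ^ n) /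
    (2 * (Real.pi : ℂ) * (qpi q β * qpi q (β * q) * qp q (β ^ 2) n * (1 - β)))

/-- The homogeneous polynomials `Φ_n^{(a,b)}(x, y | q)`. -/
noncomputable def Phi (q a b : ℂ) (n : ℕ) (x y : ℂ) : ℂ :=
  ∑ k ∈ Finset.range (n + 1),
    qp q q n / (qp q q k * qp q q (n - k)) * qp q a k * qp q b (n - k) * x ^ k * y ^ (n - k)

/-- The Jackson q-integral `∫_a^b f(z) d_q z`. -/
noncomputable def jackson (q a b : ℂ) (f : ℂ → ℂ) : ℂ :=
  (1 - q) * b * ∑' n : ℕ, q ^ n * f (b * q ^ n) -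
    (1 - q) * a * ∑' n : ℕ, q ^ n * f (a * q ^ n)

/-!
Write `F_a(z) = Σₘ (a;q)ₘ/(q;q)ₘ zᵐ`. Its functional equation `(1 - z) F_a(z) = (1 - az) F_a(qz)`,
iterated and passed to the limit, gives the q-binomial theorem `F_a(z) = (az;q)_∞/(z;q)_∞`.
Expanding `(αtqⁿ;q)_∞/(tqⁿ;q)_∞ = F_α(tqⁿ)` and using
`qⁿ (q^{n+1};q)_∞/(αqⁿ;q)_∞ = (q;q)_∞/(α;q)_∞ · (α;q)ₙ/(q;q)ₙ qⁿ`, the left-hand series becomes the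
absolutely convergent double series of
`(q;q)_∞/(α;q)_∞ · (α;q)ₙ/(q;q)ₙ qⁿ · (α;q)ₘ/(q;q)ₘ tᵐ · q^{nm}`.
Summing over `n` first gives `F_α(q^{m+1})`, and the infinite products then collapse to
`tᵐ/(1 - αqᵐ)`.
-/

open Filter Topology

lemma summable_norm_tsum_of_summable_norm_uncurry {β γ E : Type*} [NormedAddCommGroup E]
    {f : β → γ → E} (hf : Summable fun p : β × γ => ‖f p.1 p.2‖) :
    Summable fun b => ‖∑' c, f b c‖ :=
  hf.prod.of_nonneg_of_le (fun _ => norm_nonneg _) fun b =>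
    norm_tsum_le_tsum_norm (hf.prod_factor b)

variable {q : ℂ}

lemma norm_mul_pow_le (hq : ‖q‖ ≤ 1) (a : ℂ) (k : ℕ) : ‖a * q ^ k‖ ≤ ‖a‖ := by
  rw [norm_mul, norm_pow]
  exact mul_le_of_le_one_right (norm_nonneg a) (pow_le_one₀ (norm_nonneg q) hq)

lemma norm_pow_mul_lt_one (hq : ‖q‖ ≤ 1) {z : ℂ} (hz : ‖z‖ < 1) (N : ℕ) : ‖q ^ N * z‖ < 1 :=
  (mul_comm z (q ^ N) ▸ norm_mul_pow_le hq z N).trans_lt hz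

lemma summable_norm_mul_pow (hq : ‖q‖ < 1) (a : ℂ) : Summable fun k : ℕ => ‖a * q ^ k‖ := by
  simpa [norm_mul, norm_pow] using
    (summable_geometric_of_lt_one (norm_nonneg q) hq).mul_left ‖a‖

lemma multipliable_one_sub_mul_pow (hq : ‖q‖ < 1) (a : ℂ) :
    Multipliable fun k : ℕ => 1 - a * q ^ k := by
  simpa [sub_eq_add_neg] using
    multipliable_one_add_of_summable (f := fun k : ℕ => -(a * q ^ k))
      (by simpa using summable_norm_mul_pow hq a)

lemma tendsto_qp (hq : ‖q‖ < 1) (a : ℂ) : Tendsto (qp q a) atTop (𝓝 (qpi q a)) :=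
  (multipliable_one_sub_mul_pow hq a).hasProd.tendsto_prod_nat

lemma qpi_ne_zero (hq : ‖q‖ < 1) {a : ℂ} (ha : ‖a‖ < 1) : qpi q a ≠ 0 := by
  have hfactor (k : ℕ) : 1 + -(a * q ^ k) ≠ 0 := by
    rw [← sub_eq_add_neg, sub_ne_zero]
    intro h
    simpa [← h] using (norm_mul_pow_le hq.le a k).trans_lt ha
  simpa [qpi, sub_eq_add_neg] using
    tprod_one_add_ne_zero_of_summable hfactor (by simpa using summable_norm_mul_pow hq a)

lemma qp_mul_qpi (hq : ‖q‖ < 1) (a : ℂ) (n : ℕ) : qp q a n * qpi q (a * q ^ n) = qpi q a := by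
  have hshift (k : ℕ) : 1 - a * q ^ (k + n) = 1 - a * q ^ n * q ^ k := by ring
  have hm : Multipliable fun k => 1 - a * q ^ (k + n) :=
    (multipliable_one_sub_mul_pow hq (a * q ^ n)).congr fun k => (hshift k).symm
  rw [qpi, qpi, ← hm.prod_mul_tprod_nat_mul' (f := fun k => 1 - a * q ^ k), qp,
    tprod_congr hshift]

lemma qpi_eq_one_sub_mul_qpi (hq : ‖q‖ < 1) (a : ℂ) : qpi q a = (1 - a) * qpi q (a * q) := by
  simpa [qp] using (qp_mul_qpi hq a 1).symm

lemma qp_ne_zero (hq : ‖q‖ < 1) {a : ℂ} (ha : qpi q a ≠ 0) (n : ℕ) : qp q a n ≠ 0 :=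
  left_ne_zero_of_mul (qp_mul_qpi hq a n ▸ ha)

lemma qp_succ (a : ℂ) (n : ℕ) : qp q a (n + 1) = qp q a n * (1 - a * q ^ n) :=
  Finset.prod_range_succ _ n

noncomputable def qbinomCoeff (q a : ℂ) (m : ℕ) : ℂ := qp q a m / qp q q m

@[simp]
lemma qbinomCoeff_zero (a : ℂ) : qbinomCoeff q a 0 = 1 := by
  simp [qbinomCoeff, qp]

lemma qbinomCoeff_succ_mul (hq : ‖q‖ < 1) (a : ℂ) (m : ℕ) :
    qbinomCoeff q a (m + 1) * (1 - q ^ (m + 1)) = qbinomCoeff q a m * (1 - a * q ^ m) := by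
  have hm := qp_ne_zero hq (qpi_ne_zero hq hq) (m + 1)
  rw [qp_succ, ← pow_succ'] at hm
  have hfactor := right_ne_zero_of_mul hm
  rw [qbinomCoeff, qbinomCoeff, qp_succ, qp_succ, ← pow_succ']
  field_simp

lemma exists_norm_qbinomCoeff_le (hq : ‖q‖ < 1) (a : ℂ) : ∃ B, ∀ m, ‖qbinomCoeff q a m‖ ≤ B := by
  have hlim : Tendsto (qbinomCoeff q a) atTop (𝓝 (qpi q a / qpi q q)) :=
    (tendsto_qp hq a).div (tendsto_qp hq q) (qpi_ne_zero hq hq)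
  obtain ⟨B, hB⟩ := hlim.norm.bddAbove_range
  exact ⟨B, fun m => hB ⟨m, rfl⟩⟩

lemma summable_qbinomCoeff_mul_pow (hq : ‖q‖ < 1) (a : ℂ) {z : ℂ} (hz : ‖z‖ < 1) :
    Summable fun m => qbinomCoeff q a m * z ^ m := by
  obtain ⟨B, hB⟩ := exists_norm_qbinomCoeff_le hq a
  refine Summable.of_norm_bounded ((summable_geometric_of_lt_one (norm_nonneg z) hz).mul_left B)
    fun m => ?_
  rw [norm_mul, norm_pow]
  exact mul_le_mul_of_nonneg_right (hB m) (by positivity)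

lemma qbinom_functional_eq (hq : ‖q‖ < 1) (a : ℂ) {w S T : ℂ}
    (hS : HasSum (fun m => qbinomCoeff q a m * w ^ m) S)
    (hT : HasSum (fun m => qbinomCoeff q a m * (q * w) ^ m) T) :
    (1 - w) * S = (1 - a * w) * T := by
  set c := qbinomCoeff q a
  have hdiff : HasSum (fun m => c m * (1 - q ^ m) * w ^ m) (S - T) :=
    (hS.sub hT).congr_fun fun m => by ring
  have hdiff' : HasSum (fun m => c m * (1 - a * q ^ m) * w ^ m) (S - a * T) :=
    (hS.sub (hT.mul_left a)).congr_fun fun m => by ring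
  have hshift : HasSum (fun m => c (m + 1) * (1 - q ^ (m + 1)) * w ^ (m + 1)) (S - T) := by
    simpa using (hasSum_nat_add_iff' 1).mpr hdiff
  have hshift' : HasSum (fun m => c (m + 1) * (1 - q ^ (m + 1)) * w ^ (m + 1))
      (w * (S - a * T)) :=
    (hdiff'.mul_left w).congr_fun fun m => by rw [qbinomCoeff_succ_mul hq]; ring
  linear_combination hshift.unique hshift'

lemma qp_mul_tsum_qbinom (hq : ‖q‖ < 1) (a : ℂ) {z : ℂ} (hz : ‖z‖ < 1) (N : ℕ) :
    qp q z N * ∑' m, qbinomCoeff q a m * z ^ m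
      = qp q (a * z) N * ∑' m, qbinomCoeff q a m * (q ^ N * z) ^ m := by
  induction N with
  | zero => simp [qp]
  | succ N ih =>
    have hw := norm_pow_mul_lt_one hq.le hz N
    have hqw : ‖q * (q ^ N * z)‖ < 1 := by
      simpa [← mul_assoc, ← pow_succ'] using norm_pow_mul_lt_one hq.le hz (N + 1)
    have hfun := qbinom_functional_eq hq a (summable_qbinomCoeff_mul_pow hq a hw).hasSum
      (summable_qbinomCoeff_mul_pow hq a hqw).hasSum
    rw [← mul_assoc q, ← pow_succ'] at hfun
    rw [qp_succ, qp_succ]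
    linear_combination (1 - z * q ^ N) * ih + qp q (a * z) N * hfun

lemma tendsto_tsum_qbinom_pow_mul (hq : ‖q‖ < 1) (a : ℂ) {z : ℂ} (hz : ‖z‖ < 1) :
    Tendsto (fun N => ∑' m, qbinomCoeff q a m * (q ^ N * z) ^ m) atTop (𝓝 1) := by
  obtain ⟨B, hB⟩ := exists_norm_qbinomCoeff_le hq a
  have hterm (m : ℕ) : Tendsto (fun N => qbinomCoeff q a m * (q ^ N * z) ^ m) atTop
      (𝓝 (qbinomCoeff q a m * 0 ^ m)) := by
    simpa using (((tendsto_pow_atTop_nhds_zero_of_norm_lt_one hq).mul_const z).pow m).const_mul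
      (qbinomCoeff q a m)
  have hbound : ∀ᶠ N in atTop, ∀ m, ‖qbinomCoeff q a m * (q ^ N * z) ^ m‖ ≤ B * ‖z‖ ^ m :=
    Eventually.of_forall fun N m => by
      rw [norm_mul, norm_pow]
      exact mul_le_mul (hB m) (pow_le_pow_left₀ (norm_nonneg _)
        (mul_comm z (q ^ N) ▸ norm_mul_pow_le hq.le z N) m) (by positivity)
        ((norm_nonneg _).trans (hB 0))
  have hzero : ∑' m, qbinomCoeff q a m * 0 ^ m = 1 := by
    rw [tsum_eq_single 0 fun m hm => by simp [hm]]
    simp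
  simpa [hzero] using tendsto_tsum_of_dominated_convergence
    ((summable_geometric_of_lt_one (norm_nonneg z) hz).mul_left B) hterm hbound

theorem hasSum_qbinom (hq : ‖q‖ < 1) (a : ℂ) {z : ℂ} (hz : ‖z‖ < 1) :
    HasSum (fun m => qbinomCoeff q a m * z ^ m) (qpi q (a * z) / qpi q z) := by
  set F := ∑' m, qbinomCoeff q a m * z ^ m
  have hlim : Tendsto (fun N => qp q z N * F) atTop (𝓝 (qpi q (a * z) * 1)) :=
    ((tendsto_qp hq (a * z)).mul (tendsto_tsum_qbinom_pow_mul hq a hz)).congr fun N =>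
      (qp_mul_tsum_qbinom hq a hz N).symm
  have hF : qpi q z * F = qpi q (a * z) * 1 :=
    tendsto_nhds_unique ((tendsto_qp hq z).mul_const F) hlim
  rw [mul_one, mul_comm] at hF
  exact eq_div_of_mul_eq (qpi_ne_zero hq hz) hF ▸ (summable_qbinomCoeff_mul_pow hq a hz).hasSum

lemma qpi_div_qpi_mul_qbinomCoeff (hq : ‖q‖ < 1) {a : ℂ} (ha : qpi q a ≠ 0) (n : ℕ) :
    qpi q q / qpi q a * qbinomCoeff q a n = qpi q (q ^ (n + 1)) / qpi q (a * q ^ n) := by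
  have hqq := qp_ne_zero hq (qpi_ne_zero hq hq) n
  rw [← qp_mul_qpi hq a n] at ha ⊢
  rw [← qp_mul_qpi hq q n, ← pow_succ', qbinomCoeff]
  have hqpa := left_ne_zero_of_mul ha
  have hqpia := right_ne_zero_of_mul ha
  field_simp

noncomputable def qbinomDoubleTerm (q α t : ℂ) (n m : ℕ) : ℂ :=
  qpi q q / qpi q α * (qbinomCoeff q α n * q ^ n) * (qbinomCoeff q α m * t ^ m) * q ^ (n * m)

lemma summable_norm_qbinomDoubleTerm (hq : ‖q‖ < 1) (α : ℂ) {t : ℂ} (ht : ‖t‖ < 1) :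
    Summable fun p : ℕ × ℕ => ‖qbinomDoubleTerm q α t p.1 p.2‖ := by
  obtain ⟨B, hB⟩ := exists_norm_qbinomCoeff_le hq α
  have hB0 : 0 ≤ B := (norm_nonneg _).trans (hB 0)
  refine Summable.of_nonneg_of_le (fun _ => norm_nonneg _) (fun p => ?_)
    (((summable_geometric_of_lt_one (norm_nonneg q) hq).mul_of_nonneg
      (summable_geometric_of_lt_one (norm_nonneg t) ht) (fun _ => by positivity)
      (fun _ => by positivity)).mul_left (‖qpi q q / qpi q α‖ * B * B))
  have hpow : ‖q ^ (p.1 * p.2)‖ ≤ 1 := by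
    rw [norm_pow]; exact pow_le_one₀ (norm_nonneg q) hq.le
  simp only [qbinomDoubleTerm, norm_mul, norm_pow]
  calc _ ≤ ‖qpi q q / qpi q α‖ * (B * ‖q‖ ^ p.1) * (B * ‖t‖ ^ p.2) * 1 := by
        gcongr
        · exact hB _
        · exact hB _
        · simpa using hpow
    _ = _ := by ring

lemma hasSum_qbinomDoubleTerm_row (hq : ‖q‖ < 1) {α t : ℂ} (hα : ‖α‖ < 1) (ht : ‖t‖ < 1)
    (n : ℕ) :
    HasSum (qbinomDoubleTerm q α t n)
      (q ^ n * (qpi q (q ^ (n + 1)) * qpi q (α * t * q ^ n)) /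
        (qpi q (α * q ^ n) * qpi q (t * q ^ n))) := by
  set C := qpi q q / qpi q α * qbinomCoeff q α n
  have hC : C = qpi q (q ^ (n + 1)) / qpi q (α * q ^ n) :=
    qpi_div_qpi_mul_qbinomCoeff hq (qpi_ne_zero hq hα) n
  have hbinom := (hasSum_qbinom hq α ((norm_mul_pow_le hq.le t n).trans_lt ht)).mul_left (C * q ^ n)
  have hval : q ^ n * (qpi q (q ^ (n + 1)) * qpi q (α * t * q ^ n)) /
      (qpi q (α * q ^ n) * qpi q (t * q ^ n))
      = C * q ^ n * (qpi q (α * (t * q ^ n)) / qpi q (t * q ^ n)) := by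
    rw [hC, ← mul_assoc α]
    ring
  rw [hval]
  refine hbinom.congr_fun fun m => ?_
  simp only [qbinomDoubleTerm, C]
  ring

lemma hasSum_qbinomDoubleTerm_column (hq : ‖q‖ < 1) {α : ℂ} (hα : ‖α‖ < 1) (t : ℂ) (m : ℕ) :
    HasSum (fun n => qbinomDoubleTerm q α t n m) (t ^ m / (1 - α * q ^ m)) := by
  have hqm : ‖q ^ (m + 1)‖ < 1 := by
    rw [norm_pow]; exact pow_lt_one₀ (norm_nonneg q) hq (Nat.succ_ne_zero m)
  set C := qpi q q / qpi q α * qbinomCoeff q α m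
  have hC : C = qpi q (q ^ (m + 1)) / qpi q (α * q ^ m) :=
    qpi_div_qpi_mul_qbinomCoeff hq (qpi_ne_zero hq hα) m
  have hbinom := (hasSum_qbinom hq α hqm).mul_left (C * t ^ m)
  have hsplit : qpi q (α * q ^ m) = (1 - α * q ^ m) * qpi q (α * q ^ (m + 1)) := by
    rw [qpi_eq_one_sub_mul_qpi hq, mul_assoc, ← pow_succ]
  have hfactor : 1 - α * q ^ m ≠ 0 :=
    left_ne_zero_of_mul (hsplit ▸ qpi_ne_zero hq ((norm_mul_pow_le hq.le α m).trans_lt hα))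
  have hαm := qpi_ne_zero hq ((norm_mul_pow_le hq.le α (m + 1)).trans_lt hα)
  have hqm' := qpi_ne_zero hq hqm
  have hval : t ^ m / (1 - α * q ^ m)
      = C * t ^ m * (qpi q (α * q ^ (m + 1)) / qpi q (q ^ (m + 1))) := by
    rw [hC, hsplit]
    field_simp
  rw [hval]
  refine hbinom.congr_fun fun n => ?_
  simp only [qbinomDoubleTerm, C]
  ring

/-- Evaluation of `λ₀`: `Σ qⁿ (q^{n+1};q)_∞ (αtqⁿ;q)_∞ / ((αqⁿ;q)_∞ (tqⁿ;q)_∞)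
    = Σ tⁿ/(1-αqⁿ)`, both series converging absolutely. -/
theorem stmt11 (q α t : ℂ) (hq : ‖q‖ < 1) (hα : ‖α‖ < 1)
    (ht : ‖t‖ < 1) :
    Summable (fun n : ℕ =>
        ‖q ^ n * (qpi q (q ^ (n + 1)) * qpi q (α * t * q ^ n)) /
          (qpi q (α * q ^ n) * qpi q (t * q ^ n))‖) ∧
    Summable (fun n : ℕ => ‖t ^ n / (1 - α * q ^ n)‖) ∧
    ∑' n : ℕ,
        q ^ n * (qpi q (q ^ (n + 1)) * qpi q (α * t * q ^ n)) /
          (qpi q (α * q ^ n) * qpi q (t * q ^ n)) =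
      ∑' n : ℕ, t ^ n / (1 - α * q ^ n) := by
  have hD := summable_norm_qbinomDoubleTerm hq α ht
  have hrow := hasSum_qbinomDoubleTerm_row hq hα ht
  have hcol := hasSum_qbinomDoubleTerm_column hq hα t
  refine ⟨?_, ?_, ?_⟩
  · simpa only [(hrow _).tsum_eq] using
      summable_norm_tsum_of_summable_norm_uncurry (f := qbinomDoubleTerm q α t) hD
  · have hD' : Summable fun p : ℕ × ℕ => ‖qbinomDoubleTerm q α t p.2 p.1‖ :=
      (Equiv.prodComm ℕ ℕ).summable_iff.mpr hD
    simpa only [(hcol _).tsum_eq] using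
      summable_norm_tsum_of_summable_norm_uncurry (f := fun m n => qbinomDoubleTerm q α t n m) hD'
  · calc _ = ∑' n, ∑' m, qbinomDoubleTerm q α t n m := tsum_congr fun n => (hrow n).tsum_eq.symm
      _ = ∑' m, ∑' n, qbinomDoubleTerm q α t n m :=
        (Summable.tsum_comm (f := qbinomDoubleTerm q α t) hD.of_norm).symm
      _ = _ := tsum_congr fun m => (hcol m).tsum_eq
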